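/- arXiv:0711.2658 — 5 statements merged into one kernel-verified Lean document; each statement's English description precedes it below -/
import Mathlib

section
/- Every linear bijection W from a finite-dimensional real inner product space V onto a subspace of ℝ^Γ (Γ finite) is a frame representation: there exists a unique family F : Γ → V such that W(A)(α) = ⟨F(α), A⟩ for all A and α, and this family F is a frame for V. -/
open InnerProductSpace

section FrameRepresentation

variable {𝕜 V Γ : Type*} [RCLike 𝕜] [NormedAddCommGroup V] [InnerProductSpace 𝕜 V]
  [FiniteDimensional 𝕜 V]

theorem LinearMap.existsUnique_inner_left_eq_apply (W : V →ₗ[𝕜] (Γ → 𝕜)) :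
    ∃! F : Γ → V, ∀ (A : V) (α : Γ), W A α = inner 𝕜 (F α) A := by
  have := FiniteDimensional.complete 𝕜 V
  refine ⟨fun α => (toDual 𝕜 V).symm (LinearMap.toContinuousLinearMap (LinearMap.proj α ∘ₗ W)),
    fun A α => by simp, fun G hG => funext fun α => ext_inner_right 𝕜 fun A => ?_⟩
  simp [← hG]

theorem Submodule.span_range_eq_top_of_inner_left_injective {W : V →ₗ[𝕜] (Γ → 𝕜)}
    (hW : Function.Injective W) {F : Γ → V} (hF : ∀ (A : V) (α : Γ), W A α = inner 𝕜 (F α) A) :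
    Submodule.span 𝕜 (Set.range F) = ⊤ := by
  -- a vector orthogonal to every `F α` lies in the kernel of `W`
  rw [← Submodule.orthogonal_eq_bot_iff, Submodule.eq_bot_iff]
  intro A hA
  refine hW (funext fun α => ?_)
  rw [map_zero, hF, Pi.zero_apply]
  exact (Submodule.mem_orthogonal _ _).1 hA (F α) (Submodule.subset_span ⟨α, rfl⟩)

end FrameRepresentation

theorem stmt4_general {V : Type*} [NormedAddCommGroup V] [InnerProductSpace ℝ V]
    [FiniteDimensional ℝ V] {Γ : Type*}
    (W : V →ₗ[ℝ] (Γ → ℝ)) (hW : Function.Injective W) :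
    (∃! F : Γ → V, ∀ (A : V) (α : Γ), W A α = (inner ℝ (F α) A : ℝ)) ∧
    (∀ F : Γ → V, (∀ (A : V) (α : Γ), W A α = (inner ℝ (F α) A : ℝ)) →
      Submodule.span ℝ (Set.range F) = ⊤) :=
  ⟨W.existsUnique_inner_left_eq_apply,
    fun _ hF => Submodule.span_range_eq_top_of_inner_left_injective hW hF⟩

theorem stmt4 {V : Type*} [NormedAddCommGroup V] [InnerProductSpace ℝ V]
    [FiniteDimensional ℝ V] {Γ : Type*} [Fintype Γ]
    (W : V →ₗ[ℝ] (Γ → ℝ)) (hW : Function.Injective W) :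
    (∃! F : Γ → V, ∀ (A : V) (α : Γ), W A α = (inner ℝ (F α) A : ℝ)) ∧
    (∀ F : Γ → V, (∀ (A : V) (α : Γ), W A α = (inner ℝ (F α) A : ℝ)) →
      Submodule.span ℝ (Set.range F) = ⊤) :=
  stmt4_general W hW
end

section
/- Let d ≥ 2. There do not exist finite families F, E : Γ → Hermitian d×d matrices with F(α) and E(α) positive semidefinite for all α, such that for every d×d complex matrix A one has A = Σ_α tr(F(α) A) E(α). That is, no frame of positive semidefinite operators admits a dual frame consisting of positive semidefinite operators. -/
/-!
Testing the reconstruction identity on the matrix unit `E_ii` and reading off its `(j, j)` entry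
gives `0 = ∑ α, F(α)_ii E(α)_jj`, a sum of nonnegative terms, so in each term `F(α)_ii = 0` or
`E(α)_jj = 0`. A positive semidefinite matrix with a vanishing diagonal entry has the whole row
vanishing, so every term of `1 = ∑ α, F(α)_ij E(α)_ji`, the `(j, i)` entry of the identity tested
on `E_ji`, is zero.
-/

open ComplexOrder

namespace Matrix

variable {𝕜 n : Type*} [RCLike 𝕜] [Fintype n] [DecidableEq n]

theorem PosSemidef.apply_eq_zero_of_diag_eq_zero {A : Matrix n n 𝕜} (hA : A.PosSemidef)
    {i : n} (hi : A i i = 0) (j : n) : A i j = 0 := by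
  have hcol : A *ᵥ Pi.single i 1 = 0 := (hA.dotProduct_mulVec_zero_iff _).mp (by simpa using hi)
  have hji : A j i = 0 := by simpa using congrFun hcol j
  rw [← hA.isHermitian.apply, hji, star_zero]

theorem sum_apply_mul_apply_eq_single_of_reconstruction {Γ : Type*} [Fintype Γ]
    {F E : Γ → Matrix n n 𝕜} (hrec : ∀ A, A = ∑ α, trace (F α * A) • E α) (k l p q : n) :
    ∑ α, F α l k * E α p q = single k l 1 p q := by
  rw [hrec (single k l 1)]
  simp [sum_apply, trace_mul_single]

theorem not_exists_posSemidef_dual_frame [Nontrivial n] {Γ : Type*} [Fintype Γ] :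
    ¬ ∃ F E : Γ → Matrix n n 𝕜, (∀ α, (F α).PosSemidef) ∧ (∀ α, (E α).PosSemidef) ∧
      ∀ A, A = ∑ α, trace (F α * A) • E α := by
  rintro ⟨F, E, hF, hE, hrec⟩
  obtain ⟨i, j, hij⟩ := exists_pair_ne n
  have hdiag : ∀ α, F α i i * E α j j = 0 := by
    have hsum := sum_apply_mul_apply_eq_single_of_reconstruction hrec i i j j
    rw [single_apply_of_row_ne hij] at hsum
    intro α
    exact (Finset.sum_eq_zero_iff_of_nonneg fun α _ ↦
      mul_nonneg (hF α).diag_nonneg (hE α).diag_nonneg).mp hsum α (Finset.mem_univ α)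
  have hoff : ∀ α, F α i j * E α j i = 0 := fun α ↦
    (mul_eq_zero.mp (hdiag α)).elim
      (fun h ↦ by rw [(hF α).apply_eq_zero_of_diag_eq_zero h, zero_mul])
      (fun h ↦ by rw [(hE α).apply_eq_zero_of_diag_eq_zero h, mul_zero])
  have hone := sum_apply_mul_apply_eq_single_of_reconstruction hrec j i j i
  simp [hoff] at hone

end Matrix

theorem stmt6 {d : ℕ} (hd : 2 ≤ d) {Γ : Type*} [Fintype Γ] :
    ¬ ∃ F E : Γ → Matrix (Fin d) (Fin d) ℂ,
        (∀ α, (F α).PosSemidef) ∧ (∀ α, (E α).PosSemidef) ∧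
        ∀ A : Matrix (Fin d) (Fin d) ℂ,
          A = ∑ α, Matrix.trace (F α * A) • E α := by
  have : Nontrivial (Fin d) := Fin.nontrivial_iff_two_le.mpr hd
  exact Matrix.not_exists_posSemidef_dual_frame
end

section
/- Let d be an odd prime, X and Z the generalized Pauli (shift and clock) operators on ℂ^d, and P the parity operator Pφ_k = φ_{−k}. Then the d² operators F(q,p) = (1/d²) X^{2q} Z^{2p} P e^{4πiqp/d}, for (q,p) ∈ ℤ_d × ℤ_d, are Hermitian and pairwise orthogonal with respect to the trace inner product; in particular they form an orthogonal basis of the real space of Hermitian d×d matrices. -/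
noncomputable section

open Matrix

/-- The shift (generalized Pauli X) operator: `X φ_k = φ_{k+1}`. -/
def pauliX (d : ℕ) [NeZero d] : Matrix (ZMod d) (ZMod d) ℂ :=
  Matrix.of fun k l => if k = l + 1 then 1 else 0

/-- The clock (generalized Pauli Z) operator: `Z φ_k = ω^k φ_k`, `ω = e^{2πi/d}`. -/
def pauliZ (d : ℕ) [NeZero d] : Matrix (ZMod d) (ZMod d) ℂ :=
  Matrix.diagonal fun k => Complex.exp (2 * Real.pi * Complex.I * k.val / d)

/-- The parity operator: `P φ_k = φ_{-k}`. -/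
def parityP (d : ℕ) [NeZero d] : Matrix (ZMod d) (ZMod d) ℂ :=
  Matrix.of fun k l => if k = -l then 1 else 0

/-- The Wootters frame `F(q,p) = (1/d²) X^{2q} Z^{2p} P e^{4πiqp/d}`. -/
def woottersF (d : ℕ) [NeZero d] (q p : ZMod d) : Matrix (ZMod d) (ZMod d) ℂ :=
  (((d : ℂ) ^ 2)⁻¹ * Complex.exp (4 * Real.pi * Complex.I * q.val * p.val / d)) •
    (pauliX d ^ (2 * q.val) * pauliZ d ^ (2 * p.val) * parityP d)

/-!
In the basis `φ_k`, `F(q,p)` is `d⁻²` times a monomial matrix supported on the antidiagonal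
`k + l = 2q`, with entry `ψ(2p(k - q))` for the standard character `ψ` of `ZMod d`; this makes it
Hermitian. The trace of `F(q,p) F(q',p')` vanishes unless `2q = 2q'`, and is then `d⁻⁴` times a
character sum `∑ₖ ψ(a + 2k(p - p'))`, which vanishes unless `2p = 2p'`. As `2` is invertible
modulo an odd `d`, the `d²` matrices are pairwise trace-orthogonal with `tr F² = d⁻³ ≠ 0`, hence a
`ℂ`-basis of all matrices; the coordinates of a Hermitian matrix in a Hermitian basis are real.
-/

open ZMod

theorem Matrix.linearIndependent_of_trace_mul_eq_zero {ι n K : Type*} [Fintype n] [Field K]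
    {v : ι → Matrix n n K} (horth : ∀ i j, i ≠ j → trace (v i * v j) = 0)
    (hself : ∀ i, trace (v i * v i) ≠ 0) : LinearIndependent K v :=
  LinearMap.BilinForm.linearIndependent_of_iIsOrtho
    (B := (LinearMap.mul K (Matrix n n K)).compr₂ (traceLinearMap n K K)) horth hself

theorem Module.Basis.mem_span_real_of_isSelfAdjoint {ι M : Type*} [Fintype ι] [AddCommGroup M]
    [Module ℂ M] [Module ℝ M] [IsScalarTower ℝ ℂ M] [StarAddMonoid M] [StarModule ℂ M]
    (b : Module.Basis ι ℂ M) (hb : ∀ i, IsSelfAdjoint (b i)) {x : M} (hx : IsSelfAdjoint x) :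
    x ∈ Submodule.span ℝ (Set.range b) := by
  have hconj : ∀ i, star (b.repr x i) = b.repr x i := by
    have hstar : ∑ i, star (b.repr x i) • b i = x := by
      conv_rhs => rw [← hx.star_eq, ← b.sum_repr x]
      simp only [star_sum, star_smul, (hb _).star_eq]
    intro i
    have h := congrFun (b.repr_sum_self fun i => star (b.repr x i)) i
    rw [hstar] at h
    exact h.symm
  rw [← b.sum_repr x]
  refine Submodule.sum_mem _ fun i _ => ?_
  rw [← Complex.conj_eq_iff_re.1 (hconj i), ← Complex.coe_algebraMap, algebraMap_smul]
  exact Submodule.smul_mem _ _ (Submodule.subset_span (Set.mem_range_self i))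

theorem ZMod.isUnit_two_of_odd {d : ℕ} (hodd : Odd d) : IsUnit (2 : ZMod d) := by
  simpa using (ZMod.isUnit_iff_coprime 2 d).2 (Nat.coprime_two_left.2 hodd)

variable {d : ℕ} [NeZero d]

theorem ZMod.stdAddChar_natCast (n : ℕ) :
    stdAddChar (n : ZMod d) = Complex.exp (2 * Real.pi * Complex.I * n / d) := by
  rw [stdAddChar_apply, toCircle_natCast]

theorem pauliX_pow (m : ℕ) :
    pauliX d ^ m = of fun k l => if k = l + (m : ZMod d) then 1 else 0 := by
  induction m with
  | zero => ext k l; simp [one_apply]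
  | succ m ih =>
    rw [pow_succ, ih]
    ext k l
    simp [pauliX, mul_apply, add_assoc, add_comm (1 : ZMod d)]

theorem pauliZ_pow (m : ℕ) :
    pauliZ d ^ m = diagonal fun k => stdAddChar ((m : ZMod d) * k) := by
  have hZ : pauliZ d = diagonal fun k => stdAddChar k := by
    simp only [pauliZ, stdAddChar_apply, toCircle_apply]
  simp [hZ, diagonal_pow, ← AddChar.map_nsmul_eq_pow]

theorem pauliX_pow_mul_pauliZ_pow_mul_parityP_apply (a b : ℕ) (k l : ZMod d) :
    (pauliX d ^ a * pauliZ d ^ b * parityP d) k l =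
      if k + l = a then stdAddChar (-(b * l) : ZMod d) else 0 := by
  have hcond : k = -l + a ↔ k + l = a := by rw [neg_add_eq_sub, eq_sub_iff_add_eq]
  rw [pauliX_pow, pauliZ_pow, mul_apply]
  simp [mul_diagonal, parityP, hcond]

theorem woottersF_apply (q p k l : ZMod d) :
    woottersF d q p k l =
      if k + l = 2 * q then ((d : ℂ) ^ 2)⁻¹ * stdAddChar (2 * p * (k - q)) else 0 := by
  have hphase : Complex.exp (4 * Real.pi * Complex.I * q.val * p.val / d) =
      stdAddChar (2 * q * p) := by
    have h := stdAddChar_natCast (d := d) (2 * q.val * p.val)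
    simp only [Nat.cast_mul, Nat.cast_ofNat, ZMod.natCast_zmod_val] at h
    rw [h]
    ring_nf
  have htwice : ∀ x : ZMod d, ((2 * x.val : ℕ) : ZMod d) = 2 * x := by simp
  rw [woottersF, Matrix.smul_apply, pauliX_pow_mul_pauliZ_pow_mul_parityP_apply, hphase,
    htwice, htwice]
  split_ifs with h
  · rw [smul_eq_mul, mul_assoc, ← AddChar.map_add_eq_mul]
    congr 2
    linear_combination (-2 * p) * h
  · simp

theorem isHermitian_woottersF (q p : ZMod d) : (woottersF d q p).IsHermitian := by
  ext k l
  rw [conjTranspose_apply, woottersF_apply, woottersF_apply, add_comm l k]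
  split_ifs with h
  · rw [star_mul', star_inv₀, star_pow, star_natCast, Complex.star_def,
      ← AddChar.map_neg_eq_conj]
    congr 2
    linear_combination (-2 * p) * h
  · exact star_zero _

theorem ZMod.sum_stdAddChar_add_mul (a t : ZMod d) :
    ∑ k : ZMod d, stdAddChar (a + k * t) = if t = 0 then (d : ℂ) * stdAddChar a else 0 := by
  simp_rw [AddChar.map_add_eq_mul, ← Finset.mul_sum,
    AddChar.sum_mulShift t (isPrimitive_stdAddChar d)]
  split_ifs <;> simp [mul_comm]

theorem woottersF_mul_woottersF_apply_self (q p q' p' k : ZMod d) :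
    (woottersF d q p * woottersF d q' p') k k =
      if 2 * q = 2 * q' then
        ((d : ℂ) ^ 2)⁻¹ * ((d : ℂ) ^ 2)⁻¹ *
          stdAddChar (2 * p' * q' - 2 * p * q + k * (2 * p - 2 * p'))
      else 0 := by
  rw [mul_apply, Finset.sum_eq_single (2 * q - k)]
  · rw [woottersF_apply, woottersF_apply, if_pos (add_sub_cancel k _), sub_add_cancel]
    split_ifs with h
    · rw [mul_mul_mul_comm, ← AddChar.map_add_eq_mul]
      congr 2
      linear_combination (2 * p') * h
    · rw [mul_zero]
  · intro l _ hl
    rw [woottersF_apply, if_neg (fun h => hl (eq_sub_of_add_eq' h)), zero_mul]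
  · exact fun h => absurd (Finset.mem_univ _) h

theorem trace_woottersF_mul_woottersF (q p q' p' : ZMod d) :
    trace (woottersF d q p * woottersF d q' p') =
      if 2 * q = 2 * q' ∧ 2 * p = 2 * p' then ((d : ℂ) ^ 3)⁻¹ else 0 := by
  simp only [trace, diag_apply, woottersF_mul_woottersF_apply_self]
  split_ifs with hq hqp hqp
  · rw [← Finset.mul_sum, sum_stdAddChar_add_mul, if_pos (sub_eq_zero.2 hqp.2)]
    have hphase : 2 * p' * q' - 2 * p * q = 0 := by
      linear_combination (-q') * hqp.2 - p * hqp.1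
    rw [hphase, AddChar.map_zero_eq_one]
    field_simp
  · rw [← Finset.mul_sum, sum_stdAddChar_add_mul,
      if_neg (fun h => hqp ⟨hq, sub_eq_zero.1 h⟩), mul_zero]
  · exact absurd hqp.1 hq
  · exact Finset.sum_const_zero

theorem trace_woottersF_mul_woottersF_of_ne (hodd : Odd d) {q p q' p' : ZMod d}
    (h : (q, p) ≠ (q', p')) : trace (woottersF d q p * woottersF d q' p') = 0 := by
  have hcancel := (ZMod.isUnit_two_of_odd hodd).mul_right_injective
  rw [trace_woottersF_mul_woottersF, if_neg]
  rintro ⟨hq, hp⟩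
  exact h (Prod.ext (hcancel hq) (hcancel hp))

theorem trace_woottersF_mul_self_ne_zero (q p : ZMod d) :
    trace (woottersF d q p * woottersF d q p) ≠ 0 := by
  simp [trace_woottersF_mul_woottersF, NeZero.ne d]

theorem stmt13_general (d : ℕ) [NeZero d] (hodd : Odd d) :
    (∀ q p : ZMod d, (woottersF d q p).IsHermitian) ∧
    (∀ q p q' p' : ZMod d, (q, p) ≠ (q', p') →
      Matrix.trace (woottersF d q p * woottersF d q' p') = 0) ∧
    LinearIndependent ℝ (fun qp : ZMod d × ZMod d => woottersF d qp.1 qp.2) ∧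
    (∀ A : Matrix (ZMod d) (ZMod d) ℂ, A.IsHermitian →
      A ∈ Submodule.span ℝ (Set.range fun qp : ZMod d × ZMod d => woottersF d qp.1 qp.2)) := by
  have hli : LinearIndependent ℂ (fun qp : ZMod d × ZMod d => woottersF d qp.1 qp.2) :=
    Matrix.linearIndependent_of_trace_mul_eq_zero
      (fun _ _ h => trace_woottersF_mul_woottersF_of_ne hodd (by simpa using h))
      (fun qp => trace_woottersF_mul_self_ne_zero qp.1 qp.2)
  have hcard :
      Fintype.card (ZMod d × ZMod d) = Module.finrank ℂ (Matrix (ZMod d) (ZMod d) ℂ) := by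
    simp [Module.finrank_matrix]
  refine ⟨isHermitian_woottersF, fun _ _ _ _ => trace_woottersF_mul_woottersF_of_ne hodd,
    hli.restrict_scalars' ℝ, fun A hA => ?_⟩
  have hbasis :=
    (basisOfLinearIndependentOfCardEqFinrank' _ hli hcard).mem_span_real_of_isSelfAdjoint
      (fun qp => by simpa using (isHermitian_woottersF qp.1 qp.2).isSelfAdjoint) hA.isSelfAdjoint
  simpa using hbasis

theorem stmt13 (d : ℕ) [NeZero d] (hprime : d.Prime) (hodd : Odd d) :
    (∀ q p : ZMod d, (woottersF d q p).IsHermitian) ∧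
    (∀ q p q' p' : ZMod d, (q, p) ≠ (q', p') →
      Matrix.trace (woottersF d q p * woottersF d q' p') = 0) ∧
    LinearIndependent ℝ (fun qp : ZMod d × ZMod d => woottersF d qp.1 qp.2) ∧
    (∀ A : Matrix (ZMod d) (ZMod d) ℂ, A.IsHermitian →
      A ∈ Submodule.span ℝ (Set.range fun qp : ZMod d × ZMod d => woottersF d qp.1 qp.2)) :=
  stmt13_general d hodd
end
end

section
/- For d ≥ 2, there exists no map from density matrices on ℂ^d and POVMs on ℂ^d to a classical probability model over a finite set Γ that is of the 'positive frame and positive dual' form: i.e., there are no families F, E : Γ → Herm(ℂ^d) of positive semidefinite operators with E dual to F such that tr(ρ M) = Σ_α tr(F(α)ρ) tr(E(α)M) holds for all Hermitian ρ, M. -/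
/-!
Testing the duality relation on rank-one projectors `v vᴴ`, `w wᴴ` gives
`|⟪v, w⟫|² = ∑ α, (vᴴ F_α v) (wᴴ E_α w)`, a sum of nonnegative terms. For orthogonal `x, y`
of equal nonzero length some `α` has `(xᴴ F_α x) (xᴴ E_α x) ≠ 0`; orthogonality of `x` and `y` (in both orders) forces
`F_α y = E_α y = 0`. Then `(x + y)ᴴ F_α (x + y) = xᴴ F_α x` and `(x - y)ᴴ E_α (x - y) = xᴴ E_α x`,
so the term of `α` for the orthogonal pair `x + y, x - y` is nonzero, a contradiction.
-/

open ComplexOrder Matrix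

lemma Matrix.trace_mul_vecMulVec {n R : Type*} [Fintype n] [CommSemiring R]
    (A : Matrix n n R) (v w : n → R) : trace (A * vecMulVec v w) = w ⬝ᵥ A *ᵥ v := by
  rw [mul_vecMulVec, trace_vecMulVec, dotProduct_comm]

lemma Matrix.IsHermitian.star_dotProduct_mulVec_add_of_mulVec_eq_zero {n R : Type*} [Fintype n]
    [CommRing R] [StarRing R] {A : Matrix n n R} (hA : A.IsHermitian) {y : n → R}
    (hy : A *ᵥ y = 0) (x : n → R) :
    star (x + y) ⬝ᵥ A *ᵥ (x + y) = star x ⬝ᵥ A *ᵥ x := by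
  have hyA : star y ᵥ* A = 0 := by rw [← hA.eq, ← star_mulVec, hy, star_zero]
  rw [mulVec_add, hy, add_zero, star_add, add_dotProduct, dotProduct_mulVec (star y), hyA,
    zero_dotProduct, add_zero]

section PositiveDual

variable {n Γ : Type*} [Fintype n] [Fintype Γ] {F E : Γ → Matrix n n ℂ}

lemma sum_quadForm_mul_quadForm_eq
    (h : ∀ ρ M : Matrix n n ℂ, ρ.IsHermitian → M.IsHermitian →
      trace (ρ * M) = ∑ α, trace (F α * ρ) * trace (E α * M)) (v w : n → ℂ) :
    ∑ α, (star v ⬝ᵥ F α *ᵥ v) * (star w ⬝ᵥ E α *ᵥ w) = (star w ⬝ᵥ v) * (star v ⬝ᵥ w) := by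
  have := h _ _ (posSemidef_vecMulVec_self_star v).isHermitian
    (posSemidef_vecMulVec_self_star w).isHermitian
  simp only [trace_mul_vecMulVec, vecMulVec_mul_vecMulVec, trace_vecMulVec, dotProduct_smul,
    smul_eq_mul] at this
  rw [← this, dotProduct_comm v, mul_comm]

variable (hF : ∀ α, (F α).PosSemidef) (hE : ∀ α, (E α).PosSemidef)
  (hdual : ∀ v w : n → ℂ,
    ∑ α, (star v ⬝ᵥ F α *ᵥ v) * (star w ⬝ᵥ E α *ᵥ w) = (star w ⬝ᵥ v) * (star v ⬝ᵥ w))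
include hF hE hdual

lemma quadForm_mul_quadForm_eq_zero_of_orthogonal {v w : n → ℂ} (hvw : star v ⬝ᵥ w = 0)
    (α : Γ) : (star v ⬝ᵥ F α *ᵥ v) * (star w ⬝ᵥ E α *ᵥ w) = 0 := by
  have hsum := hdual v w
  rw [hvw, mul_zero, Finset.sum_eq_zero_iff_of_nonneg fun β _ =>
    mul_nonneg ((hF β).dotProduct_mulVec_nonneg v) ((hE β).dotProduct_mulVec_nonneg w)] at hsum
  exact hsum α (Finset.mem_univ α)

lemma false_of_orthogonal {x y : n → ℂ} (hx : star x ⬝ᵥ x ≠ 0)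
    (hxy : star x ⬝ᵥ y = 0) (hnorm : star x ⬝ᵥ x = star y ⬝ᵥ y) : False := by
  have hyx : star y ⬝ᵥ x = 0 := by rw [star_dotProduct, hxy, star_zero]
  obtain ⟨α, -, hα⟩ : ∃ α ∈ Finset.univ, (star x ⬝ᵥ F α *ᵥ x) * (star x ⬝ᵥ E α *ᵥ x) ≠ 0 :=
    Finset.exists_ne_zero_of_sum_ne_zero (by rw [hdual]; exact mul_ne_zero hx hx)
  have hEy : E α *ᵥ y = 0 := ((hE α).dotProduct_mulVec_zero_iff y).1 <|
    (mul_eq_zero.1 (quadForm_mul_quadForm_eq_zero_of_orthogonal hF hE hdual hxy α)).resolve_left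
      (left_ne_zero_of_mul hα)
  have hFy : F α *ᵥ y = 0 := ((hF α).dotProduct_mulVec_zero_iff y).1 <|
    (mul_eq_zero.1 (quadForm_mul_quadForm_eq_zero_of_orthogonal hF hE hdual hyx α)).resolve_right
      (right_ne_zero_of_mul hα)
  have hsumdiff : star (x + y) ⬝ᵥ (x + -y) = 0 := by
    simp only [star_add, add_dotProduct, dotProduct_add, dotProduct_neg, hxy, hyx, hnorm]
    ring
  have := quadForm_mul_quadForm_eq_zero_of_orthogonal hF hE hdual hsumdiff α
  rw [(hF α).isHermitian.star_dotProduct_mulVec_add_of_mulVec_eq_zero hFy,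
    (hE α).isHermitian.star_dotProduct_mulVec_add_of_mulVec_eq_zero
      (by rw [mulVec_neg, hEy, neg_zero])] at this
  exact hα this

end PositiveDual

theorem stmt15 {d : ℕ} (hd : 2 ≤ d) {Γ : Type*} [Fintype Γ] :
    ¬ ∃ F E : Γ → Matrix (Fin d) (Fin d) ℂ,
        (∀ α, (F α).PosSemidef) ∧ (∀ α, (E α).PosSemidef) ∧
        ∀ ρ M : Matrix (Fin d) (Fin d) ℂ, ρ.IsHermitian → M.IsHermitian →
          Matrix.trace (ρ * M) =
            ∑ α, Matrix.trace (F α * ρ) * Matrix.trace (E α * M) := by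
  rintro ⟨F, E, hF, hE, h⟩
  let i : Fin d := ⟨0, by omega⟩
  let j : Fin d := ⟨1, by omega⟩
  have hij : i ≠ j := by simp [i, j, Fin.ext_iff]
  refine false_of_orthogonal hF hE (sum_quadForm_mul_quadForm_eq h)
    (x := Pi.single i 1) (y := Pi.single j 1) ?_ ?_ ?_ <;>
    simp [Pi.star_single, hij]
end

section
/- Let F : Γ → Herm(ℂ^d) with d ≥ 2 be a finite family of positive semidefinite operators spanning Herm(ℂ^d), and E any dual frame. Then there exists α ∈ Γ and a positive semidefinite operator M (an effect, 0 ≤ M ≤ I) such that tr(E(α) M) < 0; i.e., some conditional quasi-probability is negative. -/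
open ComplexOrder

/-!
If every `tr(E α M)` with `M` an effect had nonnegative real part, testing on rank-one
projections onto eigenvectors would make every `E α` positive semidefinite. Applying the
dual-frame identity to `x x*` and pairing with a vector `y ⊥ x` then gives
`∑ α ⟨x, F α x⟩ ⟨y, E α y⟩ = 0`, a sum of nonnegative terms, so each term vanishes. When
`d ≥ 2` this forces `F α = 0` or `E α = 0` for every `α`, and the identity
`1 = ∑ α tr(F α) E α` collapses to `1 = 0`.
-/

namespace Matrix

variable {n : Type*} [Fintype n]

lemma trace_mul_vecMulVec_self_star (A : Matrix n n ℂ) (u : n → ℂ) :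
    trace (A * vecMulVec u (star u)) = star u ⬝ᵥ A *ᵥ u := by
  rw [mul_vecMulVec, trace_vecMulVec, dotProduct_comm]

lemma quadForm_mul_quadForm_eq_zero_of_orthogonal {Γ : Type*} [Fintype Γ]
    {F E : Γ → Matrix n n ℂ} (hF : ∀ α, (F α).PosSemidef) (hE : ∀ α, (E α).PosSemidef)
    (hdual : ∀ A : Matrix n n ℂ, A.IsHermitian → A = ∑ α, trace (F α * A) • E α)
    {x y : n → ℂ} (hxy : star x ⬝ᵥ y = 0) (α : Γ) :
    (star x ⬝ᵥ F α *ᵥ x) * (star y ⬝ᵥ E α *ᵥ y) = 0 := by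
  have hsum : ∑ β, (star x ⬝ᵥ F β *ᵥ x) * (star y ⬝ᵥ E β *ᵥ y) = 0 :=
    calc ∑ β, (star x ⬝ᵥ F β *ᵥ x) * (star y ⬝ᵥ E β *ᵥ y)
        = star y ⬝ᵥ (∑ β, trace (F β * vecMulVec x (star x)) • E β) *ᵥ y := by
          simp [sum_mulVec, dotProduct_sum, smul_mulVec, trace_mul_vecMulVec_self_star]
      _ = 0 := by
          rw [← hdual _ (posSemidef_vecMulVec_self_star x).isHermitian, vecMulVec_mulVec, hxy]
          simp
  exact (Finset.sum_eq_zero_iff_of_nonneg fun β _ =>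
    mul_nonneg ((hF β).dotProduct_mulVec_nonneg x) ((hE β).dotProduct_mulVec_nonneg y)).1
      hsum α (Finset.mem_univ α)

variable [DecidableEq n]

def IsEffect (M : Matrix n n ℂ) : Prop := M.PosSemidef ∧ (1 - M).PosSemidef

lemma isEffect_vecMulVec_self_star {u : n → ℂ} (hu : star u ⬝ᵥ u = 1) :
    IsEffect (vecMulVec u (star u)) := by
  set P := vecMulVec u (star u)
  have hP : P.IsHermitian := (posSemidef_vecMulVec_self_star u).isHermitian
  have hPP : P * P = P := by
    rw [vecMulVec_mul_vecMulVec, hu, one_smul]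
  have hQ : (1 - P)ᴴ * (1 - P) = 1 - P := by
    simp [hP.eq, sub_mul, mul_sub, hPP]
  exact ⟨posSemidef_vecMulVec_self_star u, hQ ▸ posSemidef_conjTranspose_mul_self _⟩

lemma exists_isEffect_re_trace_mul_neg {E : Matrix n n ℂ} (hE : E.IsHermitian)
    (hnot : ¬E.PosSemidef) : ∃ M, IsEffect M ∧ (trace (E * M)).re < 0 := by
  obtain ⟨i, hi⟩ : ∃ i, hE.eigenvalues i < 0 := by
    simpa [hE.posSemidef_iff_eigenvalues_nonneg, Pi.le_def] using hnot
  set u : n → ℂ := WithLp.ofLp (hE.eigenvectorBasis i)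
  have hu : star u ⬝ᵥ u = 1 := by
    rw [dotProduct_comm, ← EuclideanSpace.inner_eq_star_dotProduct,
      inner_self_eq_norm_sq_to_K, hE.eigenvectorBasis.orthonormal.1 i]
    simp
  refine ⟨_, isEffect_vecMulVec_self_star hu, ?_⟩
  rw [trace_mul_vecMulVec_self_star, hE.mulVec_eigenvectorBasis, dotProduct_smul, hu]
  simpa using hi

lemma eq_zero_or_eq_zero_of_forall_orthogonal [Nontrivial n] {F E : Matrix n n ℂ}
    (hF : F.PosSemidef) (hE : E.PosSemidef)
    (h : ∀ x y : n → ℂ, star x ⬝ᵥ y = 0 → (star x ⬝ᵥ F *ᵥ x) * (star y ⬝ᵥ E *ᵥ y) = 0) :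
    F = 0 ∨ E = 0 := by
  refine or_iff_not_imp_left.2 fun hF0 => ?_
  have hkill : ∀ x y, star x ⬝ᵥ y = 0 → star x ⬝ᵥ F *ᵥ x ≠ 0 → E *ᵥ y = 0 :=
    fun x y hxy hx =>
      (hE.dotProduct_mulVec_zero_iff y).1 ((mul_eq_zero.1 (h x y hxy)).resolve_left hx)
  obtain ⟨i, -, hi⟩ : ∃ i ∈ Finset.univ, F i i ≠ 0 :=
    Finset.exists_ne_zero_of_sum_ne_zero (mt hF.trace_eq_zero_iff.1 hF0)
  set e : n → n → ℂ := fun k => Pi.single k 1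
  have hoff : ∀ k ≠ i, E *ᵥ e k = 0 := fun k hk =>
    hkill (e i) (e k) (by simp [e, hk.symm]) (by simpa [e] using hi)
  obtain ⟨j, hj⟩ := exists_ne i
  -- One of `e i ± e j` is not `F`-null, and `E` kills its orthogonal partner `e i ∓ e j`.
  have hpar : star (e i + e j) ⬝ᵥ F *ᵥ (e i + e j) + star (e i - e j) ⬝ᵥ F *ᵥ (e i - e j)
      = 2 * (F i i + F j j) := by
    simp only [e, star_add, star_sub, Pi.star_single, star_one, mulVec_add, mulVec_sub,
      mulVec_single, MulOpposite.op_one, one_smul, dotProduct_add, add_dotProduct,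
      dotProduct_sub, sub_dotProduct, single_dotProduct, col_apply, one_mul]
    ring
  have hdiag : F i i + F j j ≠ 0 :=
    (add_pos_of_pos_of_nonneg (lt_of_le_of_ne hF.diag_nonneg hi.symm) hF.diag_nonneg).ne'
  have hEi : E *ᵥ e i = 0 := by
    by_cases hplus : star (e i + e j) ⬝ᵥ F *ᵥ (e i + e j) = 0
    · have hminus : star (e i - e j) ⬝ᵥ F *ᵥ (e i - e j) ≠ 0 := by
        intro h0
        rw [hplus, h0] at hpar
        simp [hdiag] at hpar
      have := hkill _ (e i + e j) (by simp [e, hj, hj.symm]) hminus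
      rwa [mulVec_add, hoff j hj, add_zero] at this
    · have := hkill _ (e i - e j) (by simp [e, hj, hj.symm]) hplus
      rwa [mulVec_sub, hoff j hj, sub_zero] at this
  have hcol : ∀ k, E *ᵥ e k = 0 := fun k => by
    rcases eq_or_ne k i with rfl | hk
    exacts [hEi, hoff k hk]
  ext a k
  simpa [e] using congrFun (hcol k) a

end Matrix

theorem stmt16_general {d : ℕ} (hd : 2 ≤ d) {Γ : Type*} [Fintype Γ]
    (F E : Γ → Matrix (Fin d) (Fin d) ℂ)
    (hFpos : ∀ α, (F α).PosSemidef)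
    (hEh : ∀ α, (E α).IsHermitian)
    (hdual : ∀ A : Matrix (Fin d) (Fin d) ℂ, A.IsHermitian →
      A = ∑ α, Matrix.trace (F α * A) • E α) :
    ∃ (α : Γ) (M : Matrix (Fin d) (Fin d) ℂ),
      M.PosSemidef ∧ (1 - M).PosSemidef ∧ (Matrix.trace (E α * M)).re < 0 := by
  by_contra! hcon
  have hE : ∀ α, (E α).PosSemidef := fun α => by
    by_contra hnot
    obtain ⟨M, ⟨hM, hM'⟩, hneg⟩ := Matrix.exists_isEffect_re_trace_mul_neg (hEh α) hnot
    exact hneg.not_ge (hcon α M hM hM')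
  have : Nontrivial (Fin d) := Fin.nontrivial_iff_two_le.2 hd
  have hterm : ∀ α, (F α).trace • E α = 0 := fun α => by
    rcases Matrix.eq_zero_or_eq_zero_of_forall_orthogonal (hFpos α) (hE α) fun x y hxy =>
      Matrix.quadForm_mul_quadForm_eq_zero_of_orthogonal hFpos hE hdual hxy α with h | h <;>
      simp [h]
  simpa [hterm] using hdual 1 Matrix.isHermitian_one

theorem stmt16 {d : ℕ} (hd : 2 ≤ d) {Γ : Type*} [Fintype Γ]
    (F E : Γ → Matrix (Fin d) (Fin d) ℂ)
    (hFpos : ∀ α, (F α).PosSemidef)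
    (hFspan : ∀ A : Matrix (Fin d) (Fin d) ℂ, A.IsHermitian →
      A ∈ Submodule.span ℝ (Set.range F))
    (hEh : ∀ α, (E α).IsHermitian)
    (hdual : ∀ A : Matrix (Fin d) (Fin d) ℂ, A.IsHermitian →
      A = ∑ α, Matrix.trace (F α * A) • E α) :
    ∃ (α : Γ) (M : Matrix (Fin d) (Fin d) ℂ),
      M.PosSemidef ∧ (1 - M).PosSemidef ∧ (Matrix.trace (E α * M)).re < 0 :=
  stmt16_general hd F E hFpos hEh hdual
end
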